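/- Converse of the contraction normal form: let K and C be finite-dimensional normed spaces, X a Banach space, U ⊆ K × X an open neighborhood of (0,0), and f : U → C × X a C¹ map with f(0,0) = (0,0); write f(k,x) = (f₁(k,x), f₂(k,x)) and B(k,x) = x − f₂(k,x). Assume there exist Θ ∈ (0,1) and ε > 0 such that ‖B(k,x) − B(k,x')‖ ≤ Θ‖x − x'‖ for all k ∈ K, x, x' ∈ X with ‖k‖ < ε, ‖x‖ < ε, ‖x'‖ < ε. Then the derivative Df(0,0) : K × X → C × X is a Fredholm operator. -/

import Mathlib

/-- A bounded linear operator between Banach spaces is Fredholm if its kernel is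
finite-dimensional and its range is closed and of finite codimension. -/
def IsFredholmOperator {E F : Type*}
    [NormedAddCommGroup E] [NormedSpace ℝ E] [NormedAddCommGroup F] [NormedSpace ℝ F]
    (T : E →L[ℝ] F) : Prop :=
  FiniteDimensional ℝ (LinearMap.ker (T : E →ₗ[ℝ] F)) ∧
  IsClosed (LinearMap.range (T : E →ₗ[ℝ] F) : Set F) ∧
  FiniteDimensional ℝ (F ⧸ LinearMap.range (T : E →ₗ[ℝ] F))

/-!
Let `A` be the `X → X` block of `D = Df(0,0)` and `b` its `X → C` block. The map
`x ↦ x - f₂(0,x)` has derivative `1 - A` at `0` and is `Θ`-Lipschitz near `0`, so `‖1 - A‖ ≤ Θ < 1`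
and `A` is invertible by the Neumann series. Then the projection to `K` is injective on `ker D`,
and `range D` contains the kernel of `(y, z) ↦ y - b (A⁻¹ z)`, a continuous map into the
finite-dimensional `C`; this makes `range D` closed and of finite codimension.
-/

open ContinuousLinearMap

section Algebraic

open Submodule

variable {𝕜 E F G : Type*} [Field 𝕜] [AddCommGroup E] [Module 𝕜 E] [AddCommGroup F] [Module 𝕜 F]
  [AddCommGroup G] [Module 𝕜 G] [FiniteDimensional 𝕜 G]

theorem finiteDimensional_ker_of_disjoint_ker {T : E →ₗ[𝕜] F} {P : E →ₗ[𝕜] G}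
    (h : Disjoint (LinearMap.ker T) (LinearMap.ker P)) :
    FiniteDimensional 𝕜 (LinearMap.ker T) := by
  refine FiniteDimensional.of_injective (P ∘ₗ (LinearMap.ker T).subtype) fun v w hvw => ?_
  have hsub : (v : E) - w ∈ LinearMap.ker T ⊓ LinearMap.ker P :=
    ⟨sub_mem v.2 w.2, by simpa [sub_eq_zero] using hvw⟩
  rw [h.eq_bot, mem_bot, sub_eq_zero] at hsub
  exact Subtype.ext hsub

theorem finiteDimensional_quotient_of_ker_le {p : Submodule 𝕜 F} {Ψ : F →ₗ[𝕜] G}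
    (h : LinearMap.ker Ψ ≤ p) : FiniteDimensional 𝕜 (F ⧸ p) := by
  have : FiniteDimensional 𝕜 (F ⧸ LinearMap.ker Ψ) :=
    Module.Finite.equiv Ψ.quotKerEquivRange.symm
  refine Module.Finite.of_surjective (factor h) fun q => ?_
  obtain ⟨x, rfl⟩ := p.mkQ_surjective q
  exact ⟨(LinearMap.ker Ψ).mkQ x, factor_mk h x⟩

end Algebraic

section Fredholm

open Submodule

variable {E F G₁ G₂ : Type*} [NormedAddCommGroup E] [NormedSpace ℝ E]
  [NormedAddCommGroup F] [NormedSpace ℝ F]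
  [NormedAddCommGroup G₁] [NormedSpace ℝ G₁] [FiniteDimensional ℝ G₁]
  [NormedAddCommGroup G₂] [NormedSpace ℝ G₂] [FiniteDimensional ℝ G₂]

theorem Submodule.isClosed_of_ker_le {p : Submodule ℝ F} {Ψ : F →L[ℝ] G₂}
    (h : LinearMap.ker (Ψ : F →ₗ[ℝ] G₂) ≤ p) : IsClosed (p : Set F) := by
  rw [← comap_map_eq_self h]
  exact (map (Ψ : F →ₗ[ℝ] G₂) p).closed_of_finiteDimensional.preimage Ψ.continuous

theorem isFredholmOperator_of_disjoint_of_ker_le {T : E →L[ℝ] F} {P : E →ₗ[ℝ] G₁}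
    {Ψ : F →L[ℝ] G₂} (hP : Disjoint (LinearMap.ker (T : E →ₗ[ℝ] F)) (LinearMap.ker P))
    (hΨ : LinearMap.ker (Ψ : F →ₗ[ℝ] G₂) ≤ LinearMap.range (T : E →ₗ[ℝ] F)) :
    IsFredholmOperator T :=
  ⟨finiteDimensional_ker_of_disjoint_ker hP, isClosed_of_ker_le hΨ,
    finiteDimensional_quotient_of_ker_le hΨ⟩

end Fredholm

theorem isFredholmOperator_of_isUnit_snd_comp_comp_inr {K C X : Type*}
    [NormedAddCommGroup K] [NormedSpace ℝ K] [FiniteDimensional ℝ K]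
    [NormedAddCommGroup C] [NormedSpace ℝ C] [FiniteDimensional ℝ C]
    [NormedAddCommGroup X] [NormedSpace ℝ X] {D : (K × X) →L[ℝ] (C × X)}
    (hA : IsUnit (snd ℝ C X ∘L D ∘L inr ℝ K X)) : IsFredholmOperator D := by
  obtain ⟨u, hu⟩ := hA
  set e := ContinuousLinearEquiv.ofUnit u
  set b := fst ℝ C X ∘L D ∘L inr ℝ K X
  have hD_inr : ∀ x : X, D (0, x) = (b x, e x) := fun x =>
    Prod.ext rfl (by simp [e, ContinuousLinearEquiv.ofUnit, hu])
  -- `Ψ (y, z) = 0` says exactly that `(y, z) = D (0, e.symm z)`.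
  refine isFredholmOperator_of_disjoint_of_ker_le (P := LinearMap.fst ℝ K X)
    (Ψ := fst ℝ C X - b ∘L (e.symm : X →L[ℝ] X) ∘L snd ℝ C X) ?_ ?_
  · rw [disjoint_iff, eq_bot_iff]
    rintro ⟨k, x⟩ ⟨hker, hk⟩
    obtain rfl : k = 0 := hk
    have hx : e x = 0 := congrArg Prod.snd ((hD_inr x).symm.trans hker)
    simpa using hx
  · rintro ⟨y, z⟩ hΨ
    have hy : y = b (e.symm z) := sub_eq_zero.mp hΨ
    exact ⟨(0, e.symm z), by simp [hD_inr, hy]⟩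

theorem fredholm_of_contraction_normal_form_general {K C X : Type*}
    [NormedAddCommGroup K] [NormedSpace ℝ K] [FiniteDimensional ℝ K]
    [NormedAddCommGroup C] [NormedSpace ℝ C] [FiniteDimensional ℝ C]
    [NormedAddCommGroup X] [NormedSpace ℝ X] [CompleteSpace X]
    (f : K × X → C × X)
    (D : (K × X) →L[ℝ] (C × X)) (hD : HasFDerivAt f D (0, 0))
    (Θ ε : ℝ) (hΘ : Θ ∈ Set.Ioo (0:ℝ) 1) (hε : 0 < ε)
    (hcontr : ∀ (k : K) (x x' : X), ‖k‖ < ε → ‖x‖ < ε → ‖x'‖ < ε →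
      ‖(x - (f (k, x)).2) - (x' - (f (k, x')).2)‖ ≤ Θ * ‖x - x'‖) :
    IsFredholmOperator D := by
  apply isFredholmOperator_of_isUnit_snd_comp_comp_inr
  have hderiv : HasFDerivAt (fun x : X => x - (f (0, x)).2)
      (1 - snd ℝ C X ∘L D ∘L inr ℝ K X) 0 :=
    (hasFDerivAt_id 0).sub ((snd ℝ C X).hasFDerivAt.comp 0 (hD.comp 0 (inr ℝ K X).hasFDerivAt))
  have hnorm : ‖1 - snd ℝ C X ∘L D ∘L inr ℝ K X‖ ≤ Θ := by
    refine hderiv.le_of_lip' hΘ.1.le ?_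
    filter_upwards [Metric.ball_mem_nhds (0 : X) hε] with x hx
    simpa using hcontr 0 x 0 (by simpa using hε) (by simpa using hx) (by simpa using hε)
  simpa using isUnit_one_sub_of_norm_lt_one (hnorm.trans_lt hΘ.2)

/-- converse of the contraction normal form.  Let `K`, `C` be
finite-dimensional normed spaces, `X` a Banach space, `U` an open neighborhood of
`(0,0)` in `K × X`, and `f : U → C × X` a `C¹` map with `f(0,0) = (0,0)`.  If
`B(k,x) = x - f₂(k,x)` satisfies a uniform contraction estimate in `x` near `0`,
then the derivative `Df(0,0)` is a Fredholm operator. -/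
theorem fredholm_of_contraction_normal_form {K C X : Type*}
    [NormedAddCommGroup K] [NormedSpace ℝ K] [FiniteDimensional ℝ K]
    [NormedAddCommGroup C] [NormedSpace ℝ C] [FiniteDimensional ℝ C]
    [NormedAddCommGroup X] [NormedSpace ℝ X] [CompleteSpace X]
    (U : Set (K × X)) (hU : IsOpen U) (h0U : ((0 : K), (0 : X)) ∈ U)
    (f : K × X → C × X) (hf : ContDiffOn ℝ 1 f U) (hf0 : f (0, 0) = (0, 0))
    (D : (K × X) →L[ℝ] (C × X)) (hD : HasFDerivAt f D (0, 0))
    (Θ ε : ℝ) (hΘ : Θ ∈ Set.Ioo (0:ℝ) 1) (hε : 0 < ε)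
    (hcontr : ∀ (k : K) (x x' : X), ‖k‖ < ε → ‖x‖ < ε → ‖x'‖ < ε →
      ‖(x - (f (k, x)).2) - (x' - (f (k, x')).2)‖ ≤ Θ * ‖x - x'‖) :
    IsFredholmOperator D :=
  fredholm_of_contraction_normal_form_general f D hD Θ ε hΘ hε hcontr
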